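/- arXiv:2111.04662 — 3 statements merged into one kernel-verified Lean document; each statement's English description precedes it below -/
import Mathlib

section
/- Let φ : C → X be a covering map, x₀ ∈ X, E a set with a left action of Γ = π₁(X, x₀), Ψ₀ : E → φ⁻¹(x₀) a Γ-covariant bijection, and let Ψ be the trivialization determined by Ψ₀. Then for any point x ∈ X, any two paths λ₁, λ₂ in X from x to x₀, and any e₁, e₂ ∈ E, one has Ψ_{λ₁}(e₁) = Ψ_{λ₂}(e₂) if and only if e₁ = [λ₁⁻¹λ₂]·e₂. -/
open unitInterval

/-- The path-homotopy class of a loop, as an element of the fundamental group. -/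
noncomputable def loopClass {X : Type*} [TopologicalSpace X] {x : X} (μ : Path x x) :
    FundamentalGroup X x :=
  (show FundamentalGroupoid.mk x ⟶ FundamentalGroupoid.mk x from
    Quotient.mk (Path.Homotopic.setoid x x) μ)

/-- `Ψ₀ : E → C` is `Γ`-covariant (with respect to a covering map `φ : C → X`, a basepoint
`x₀` and an action of `π₁(X, x₀)` on `E`) if for every loop `μ` based at `x₀` and every
`e ∈ E`, any lift of `μ` to `C` ending at `Ψ₀ e` starts at `Ψ₀ ([μ] • e)`. -/
def GammaCovariant {C X : Type} [TopologicalSpace C] [TopologicalSpace X]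
    (φ : C → X) (x₀ : X) {E : Type} [MulAction (FundamentalGroup X x₀) E]
    (Ψ₀ : E → C) : Prop :=
  ∀ (μ : Path x₀ x₀) (e : E) (γ' : C(unitInterval, C)),
    (∀ t, φ (γ' t) = μ t) → γ' 1 = Ψ₀ e → γ' 0 = Ψ₀ (loopClass μ • e)

/-- `Ψ` is the trivialization of `φ` determined by `Ψ₀`: for each `x : X`, each path `l`
from `x` to `x₀` and each `e`, `Ψ x l e` is the initial point of the (unique) lift of `l`
ending at `Ψ₀ e`; we encode this by requiring that any lift of `l` ending at `Ψ₀ e` starts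
at `Ψ x l e`. -/
def IsTrivializationOf {C X : Type} [TopologicalSpace C] [TopologicalSpace X]
    (φ : C → X) (x₀ : X) {E : Type} (Ψ₀ : E → C)
    (Ψ : ∀ x : X, Path x x₀ → E → C) : Prop :=
  ∀ (x : X) (l : Path x x₀) (e : E) (γ' : C(unitInterval, C)),
    (∀ t, φ (γ' t) = l t) → γ' 1 = Ψ₀ e → γ' 0 = Ψ x l e

/-!
Everything is expressed through the monodromy of the covering on the fundamental groupoid:
`Ψ_λ e` is the monodromy of `λ⁻¹` applied to `Ψ₀ e`, and `Ψ₀ ([μ] • e)` is the monodromy of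
`μ⁻¹` applied to `Ψ₀ e`. By functoriality and invertibility of monodromy,
`Ψ_{λ₁} e₁ = Ψ_{λ₂} e₂` iff `Ψ₀ e₁` is the monodromy of `λ₂⁻¹λ₁ = (λ₁⁻¹λ₂)⁻¹` applied to
`Ψ₀ e₂`, i.e. `Ψ₀ e₁ = Ψ₀ ([λ₁⁻¹λ₂] • e₂)`, and `Ψ₀` is injective.
-/

namespace IsCoveringMap

variable {C X : Type} [TopologicalSpace C] [TopologicalSpace X] {φ : C → X}
  (cov : IsCoveringMap φ) {x y : X}
include cov

theorem monodromy_monodromy_symm (γ : Path.Homotopic.Quotient x y) (c : φ ⁻¹' {y}) :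
    cov.monodromy γ (cov.monodromy γ.symm c) = c := by
  rw [← monodromy_trans_apply, Path.Homotopic.Quotient.symm_trans, monodromy_refl, id]

theorem monodromy_symm_monodromy (γ : Path.Homotopic.Quotient x y) (b : φ ⁻¹' {x}) :
    cov.monodromy γ.symm (cov.monodromy γ b) = b := by
  rw [← monodromy_trans_apply, Path.Homotopic.Quotient.trans_symm, monodromy_refl, id]

theorem monodromy_symm_apply_eq_iff (γ : Path.Homotopic.Quotient x y) (c : φ ⁻¹' {y})
    (b : φ ⁻¹' {x}) : cov.monodromy γ.symm c = b ↔ c = cov.monodromy γ b := by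
  constructor
  · rintro rfl
    exact (cov.monodromy_monodromy_symm γ c).symm
  · rintro rfl
    exact cov.monodromy_symm_monodromy γ b

/-- Reversing the lift of `l.symm` starting at `c` gives a lift of `l` ending at `c`. -/
theorem eq_monodromy_symm_of_forall_lift (l : Path x y) (c : φ ⁻¹' {y}) {a : C}
    (h : ∀ Γ : C(unitInterval, C), (∀ t, φ (Γ t) = l t) → Γ 1 = c → Γ 0 = a) :
    a = cov.monodromy (Path.Homotopic.Quotient.mk l.symm) c := by
  have hc : l.symm 0 = φ c := by simpa using c.2.symm
  let Λ := cov.liftPath l.symm c hc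
  have hΛ : Λ (σ 0) = a := h (Λ.comp ⟨σ, continuous_symm⟩)
    (fun t => by simpa using congr_fun (cov.liftPath_lifts l.symm c hc) (σ t))
    (by simp [Λ, liftPath_zero])
  rw [symm_zero] at hΛ
  exact hΛ.symm

end IsCoveringMap

section

variable {C X : Type} [TopologicalSpace C] [TopologicalSpace X] {φ : C → X}
  (hφ : IsCoveringMap φ) {x₀ : X} {E : Type} {Ψ₀ : E → C} (hfib : ∀ e, φ (Ψ₀ e) = x₀)
include hφ

theorem GammaCovariant.apply_smul_eq_monodromy [MulAction (FundamentalGroup X x₀) E]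
    (hcov : GammaCovariant φ x₀ Ψ₀) (μ : Path x₀ x₀) (e : E) :
    Ψ₀ (loopClass μ • e) = hφ.monodromy (Path.Homotopic.Quotient.mk μ.symm) ⟨Ψ₀ e, hfib e⟩ :=
  hφ.eq_monodromy_symm_of_forall_lift μ ⟨Ψ₀ e, hfib e⟩ (hcov μ e)

theorem IsTrivializationOf.apply_eq_monodromy {Ψ : ∀ x : X, Path x x₀ → E → C}
    (hΨ : IsTrivializationOf φ x₀ Ψ₀ Ψ) {x : X} (l : Path x x₀) (e : E) :
    Ψ x l e = hφ.monodromy (Path.Homotopic.Quotient.mk l.symm) ⟨Ψ₀ e, hfib e⟩ :=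
  hφ.eq_monodromy_symm_of_forall_lift l ⟨Ψ₀ e, hfib e⟩ (hΨ x l e)

end

theorem trivialization_eq_iff_general
    {C X : Type} [TopologicalSpace C] [TopologicalSpace X]
    (φ : C → X) (hφ : IsCoveringMap φ) (x₀ : X)
    (E : Type) [MulAction (FundamentalGroup X x₀) E]
    (Ψ₀ : E → C) (hfib : ∀ e, φ (Ψ₀ e) = x₀) (hinj : Function.Injective Ψ₀)
    (hcov : GammaCovariant φ x₀ Ψ₀)
    (Ψ : ∀ x : X, Path x x₀ → E → C) (hΨ : IsTrivializationOf φ x₀ Ψ₀ Ψ) :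
    ∀ (x : X) (l₁ l₂ : Path x x₀) (e₁ e₂ : E),
      Ψ x l₁ e₁ = Ψ x l₂ e₂ ↔ e₁ = loopClass (l₁.symm.trans l₂) • e₂ := by
  intro x l₁ l₂ e₁ e₂
  have hloop : Path.Homotopic.Quotient.mk (l₁.symm.trans l₂).symm =
      (Path.Homotopic.Quotient.mk l₂.symm).trans (Path.Homotopic.Quotient.mk l₁) := by
    rw [Path.trans_symm, Path.symm_symm, Path.Homotopic.Quotient.mk_trans]
  rw [hΨ.apply_eq_monodromy hφ hfib, hΨ.apply_eq_monodromy hφ hfib, ← Subtype.ext_iff,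
    Path.Homotopic.Quotient.mk_symm, hφ.monodromy_symm_apply_eq_iff, ← hinj.eq_iff,
    hcov.apply_smul_eq_monodromy hφ hfib, hloop, hφ.monodromy_trans_apply, Subtype.ext_iff]

/-- Let `φ : C → X` be a covering map, `x₀ ∈ X`, `E` a set with a left action
of `Γ = π₁(X, x₀)`, `Ψ₀ : E → φ⁻¹(x₀)` a `Γ`-covariant bijection, and `Ψ` the trivialization
determined by `Ψ₀`. Then for any `x ∈ X`, any two paths `λ₁, λ₂` from `x` to `x₀` and any
`e₁, e₂ ∈ E`, one has `Ψ_{λ₁}(e₁) = Ψ_{λ₂}(e₂)` iff `e₁ = [λ₁⁻¹λ₂] • e₂`. -/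
theorem trivialization_eq_iff
    {C X : Type} [TopologicalSpace C] [TopologicalSpace X]
    (φ : C → X) (hφ : IsCoveringMap φ) (x₀ : X)
    (E : Type) [MulAction (FundamentalGroup X x₀) E]
    (Ψ₀ : E → C) (hfib : ∀ e, φ (Ψ₀ e) = x₀) (hinj : Function.Injective Ψ₀)
    (hsurj : ∀ c : C, φ c = x₀ → ∃ e, Ψ₀ e = c)
    (hcov : GammaCovariant φ x₀ Ψ₀)
    (Ψ : ∀ x : X, Path x x₀ → E → C) (hΨ : IsTrivializationOf φ x₀ Ψ₀ Ψ) :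
    ∀ (x : X) (l₁ l₂ : Path x x₀) (e₁ e₂ : E),
      Ψ x l₁ e₁ = Ψ x l₂ e₂ ↔ e₁ = loopClass (l₁.symm.trans l₂) • e₂ :=
  trivialization_eq_iff_general φ hφ x₀ E Ψ₀ hfib hinj hcov Ψ hΨ
end

section
/- Let X be a path-connected, locally path-connected topological space, x₀ ∈ X, and E a finite set with a left action of Γ = π₁(X, x₀). Let φ : C → X and φ' : C' → X be covering maps, and let Ψ₀ : E → φ⁻¹(x₀) and Ψ₀' : E → (φ')⁻¹(x₀) be Γ-covariant bijections. Then there exists a unique continuous map F : C → C' satisfying φ' ∘ F = φ and F ∘ Ψ₀ = Ψ₀'; this F is a homeomorphism; and for every point x ∈ X, every path λ in X from x to x₀, and every e ∈ E, one has F(Ψ_λ(e)) = Ψ'_λ(e), where Ψ and Ψ' are the trivializations determined by Ψ₀ and Ψ₀' respectively. -/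
open unitInterval

/-!
Every point of `C` has the form `Ψ_λ(e)`, and by covariance and injectivity of `Ψ₀`,
`Ψ_λ(e) = Ψ_λ'(e')` holds exactly when `λ, λ'` start at the same point and
`e = [λ⁻¹λ'] • e'`, a condition that does not mention `C`. Hence `F (Ψ_λ e) := Ψ'_λ e` is well
defined. Near any point, lifting short paths through local inverses shows that `F` is `φ`
followed by a local inverse of `φ'`, so `F` is continuous, and the same construction with the
roles exchanged gives its inverse. A continuous `G` over `X` with `G ∘ Ψ₀ = Ψ₀'` maps lifts to
lifts, so `G (Ψ_λ e) = Ψ'_λ e` as well, which gives uniqueness.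
-/

open PathConnectedSpace (somePath)

section Lifts
variable {C X : Type} [TopologicalSpace C] [TopologicalSpace X] {f : C → X}

theorem Path.lifts_trans {a b c : C} {x y z : X} {γ : Path a b} {δ : Path b c} {p : Path x y}
    {q : Path y z} (hγ : ∀ t, f (γ t) = p t) (hδ : ∀ t, f (δ t) = q t) :
    ∀ t, f (γ.trans δ t) = p.trans q t := by
  intro t
  simp only [Path.trans_apply]
  split_ifs
  exacts [hγ _, hδ _]

theorem Path.lifts_symm {a b : C} {x y : X} {γ : Path a b} {p : Path x y}
    (hγ : ∀ t, f (γ t) = p t) : ∀ t, f (γ.symm t) = p.symm t :=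
  fun t => hγ (σ t)

theorem IsCoveringMap.exists_path_lift (hf : IsCoveringMap f) {x y : X} (p : Path x y) {c : C}
    (hc : f c = x) : ∃ (d : C) (γ : Path c d), ∀ t, f (γ t) = p t := by
  obtain ⟨Γ, hΓ, hΓ0⟩ := hf.exists_path_lifts p.toContinuousMap c (by simp [hc])
  exact ⟨Γ 1, ⟨Γ, hΓ0, rfl⟩, congrFun hΓ⟩

theorem OpenPartialHomeomorph.exists_path_lift_symm (q : OpenPartialHomeomorph C X)
    (hq : f = q) {x y : X} (p : Path x y) (hp : Set.range p ⊆ q.target) :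
    ∃ γ : Path (q.symm x) (q.symm y), ∀ t, f (γ t) = p t :=
  ⟨p.map' (q.continuousOn_symm.mono hp), fun t => by
    simp only [Path.map', Path.coe_mk_mk, Function.comp_apply, hq]
    exact q.right_inv (hp ⟨t, rfl⟩)⟩

end Lifts

section Trivialization
variable {C X : Type} [TopologicalSpace C] [TopologicalSpace X] {φ : C → X} {x₀ : X}
  {E : Type} {Ψ₀ : E → C}

theorem GammaCovariant.eq_smul_of_lift [MulAction (FundamentalGroup X x₀) E]
    (hcov : GammaCovariant φ x₀ Ψ₀) {μ : Path x₀ x₀} {c : C} {e : E} (γ : Path c (Ψ₀ e))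
    (hγ : ∀ t, φ (γ t) = μ t) : c = Ψ₀ (loopClass μ • e) :=
  γ.source.symm.trans (hcov μ e γ.toContinuousMap hγ γ.target)

namespace IsTrivializationOf
variable {Ψ : ∀ x : X, Path x x₀ → E → C}

theorem eq_of_lift (hΨ : IsTrivializationOf φ x₀ Ψ₀ Ψ) {x : X} {l : Path x x₀} {c : C} {e : E}
    (γ : Path c (Ψ₀ e)) (hγ : ∀ t, φ (γ t) = l t) : c = Ψ x l e :=
  γ.source.symm.trans (hΨ x l e γ.toContinuousMap hγ γ.target)

theorem exists_lift (hΨ : IsTrivializationOf φ x₀ Ψ₀ Ψ) (hφ : IsCoveringMap φ)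
    (hfib : ∀ e, φ (Ψ₀ e) = x₀) {x : X} (l : Path x x₀) (e : E) :
    ∃ γ : Path (Ψ x l e) (Ψ₀ e), ∀ t, φ (γ t) = l t := by
  obtain ⟨c, γ, hγ⟩ := hφ.exists_path_lift l.symm (hfib e)
  have hc : c = Ψ x l e := hΨ.eq_of_lift γ.symm (by simpa using Path.lifts_symm hγ)
  exact ⟨γ.symm.cast hc.symm rfl, by simpa using Path.lifts_symm hγ⟩

theorem proj_apply (hΨ : IsTrivializationOf φ x₀ Ψ₀ Ψ) (hφ : IsCoveringMap φ)
    (hfib : ∀ e, φ (Ψ₀ e) = x₀) {x : X} (l : Path x x₀) (e : E) : φ (Ψ x l e) = x := by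
  obtain ⟨γ, hγ⟩ := hΨ.exists_lift hφ hfib l e
  simpa using hγ 0

theorem apply_refl (hΨ : IsTrivializationOf φ x₀ Ψ₀ Ψ) (hfib : ∀ e, φ (Ψ₀ e) = x₀) (e : E) :
    Ψ x₀ (Path.refl x₀) e = Ψ₀ e :=
  (hΨ.eq_of_lift (Path.refl (Ψ₀ e)) (fun _ => by simp [hfib])).symm

theorem exists_apply_eq (hΨ : IsTrivializationOf φ x₀ Ψ₀ Ψ) (hφ : IsCoveringMap φ)
    (hsurj : ∀ c : C, φ c = x₀ → ∃ e, Ψ₀ e = c) (c : C) (l : Path (φ c) x₀) :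
    ∃ e, Ψ (φ c) l e = c := by
  obtain ⟨d, γ, hγ⟩ := hφ.exists_path_lift l rfl
  obtain ⟨e, rfl⟩ := hsurj d (by simpa using hγ 1)
  exact ⟨e, (hΨ.eq_of_lift γ hγ).symm⟩

theorem funext [PathConnectedSpace X] (hΨ : IsTrivializationOf φ x₀ Ψ₀ Ψ)
    (hφ : IsCoveringMap φ) (hsurj : ∀ c : C, φ c = x₀ → ∃ e, Ψ₀ e = c) {D : Type} {F G : C → D}
    (h : ∀ x l e, F (Ψ x l e) = G (Ψ x l e)) : F = G := by
  ext c
  obtain ⟨e, he⟩ := hΨ.exists_apply_eq hφ hsurj c (somePath (φ c) x₀)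
  rw [← he, h]

theorem apply_trans (hΨ : IsTrivializationOf φ x₀ Ψ₀ Ψ) (hφ : IsCoveringMap φ)
    (hfib : ∀ e, φ (Ψ₀ e) = x₀) {x y : X} (p : Path y x) (l : Path x x₀) {e : E} {c : C}
    (γ : Path c (Ψ x l e)) (hγ : ∀ t, φ (γ t) = p t) : Ψ y (p.trans l) e = c := by
  obtain ⟨δ, hδ⟩ := hΨ.exists_lift hφ hfib l e
  exact (hΨ.eq_of_lift (γ.trans δ) (Path.lifts_trans hγ hδ)).symm

variable [MulAction (FundamentalGroup X x₀) E]

theorem eq_smul_of_apply_eq (hΨ : IsTrivializationOf φ x₀ Ψ₀ Ψ) (hφ : IsCoveringMap φ)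
    (hfib : ∀ e, φ (Ψ₀ e) = x₀) (hinj : Function.Injective Ψ₀) (hcov : GammaCovariant φ x₀ Ψ₀)
    {x : X} {l l' : Path x x₀} {e e' : E} (h : Ψ x l e = Ψ x l' e') :
    e = loopClass (l.symm.trans l') • e' := by
  obtain ⟨γ, hγ⟩ := hΨ.exists_lift hφ hfib l e
  obtain ⟨γ', hγ'⟩ := hΨ.exists_lift hφ hfib l' e'
  exact hinj <| hcov.eq_smul_of_lift (γ.symm.trans (γ'.cast h rfl))
    (Path.lifts_trans (Path.lifts_symm hγ) (by simpa using hγ'))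

theorem apply_smul_eq (hΨ : IsTrivializationOf φ x₀ Ψ₀ Ψ) (hφ : IsCoveringMap φ)
    (hfib : ∀ e, φ (Ψ₀ e) = x₀) (hcov : GammaCovariant φ x₀ Ψ₀) {x : X} (l l' : Path x x₀)
    (e' : E) : Ψ x l (loopClass (l.symm.trans l') • e') = Ψ x l' e' := by
  obtain ⟨γ', hγ'⟩ := hΨ.exists_lift hφ hfib l' e'
  obtain ⟨d, γ, hγ⟩ := hφ.exists_path_lift l (hΨ.proj_apply hφ hfib l' e')
  have hd : d = Ψ₀ (loopClass (l.symm.trans l') • e') :=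
    hcov.eq_smul_of_lift (γ.symm.trans γ') (Path.lifts_trans (Path.lifts_symm hγ) hγ')
  exact (hΨ.eq_of_lift (γ.cast rfl hd.symm) (by simpa using hγ)).symm

end IsTrivializationOf

end Trivialization

section Comparison
variable {X C C' : Type} [TopologicalSpace X] [TopologicalSpace C] [TopologicalSpace C']
  {φ : C → X} {φ' : C' → X} {x₀ : X} {E : Type} {Ψ₀ : E → C} {Ψ₀' : E → C'}
  {Ψ : ∀ x : X, Path x x₀ → E → C} {Ψ' : ∀ x : X, Path x x₀ → E → C'}

namespace IsTrivializationOf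

theorem apply_eq_of_apply_eq [MulAction (FundamentalGroup X x₀) E]
    (hΨ : IsTrivializationOf φ x₀ Ψ₀ Ψ) (hφ : IsCoveringMap φ) (hfib : ∀ e, φ (Ψ₀ e) = x₀)
    (hinj : Function.Injective Ψ₀) (hcov : GammaCovariant φ x₀ Ψ₀)
    (hΨ' : IsTrivializationOf φ' x₀ Ψ₀' Ψ') (hφ' : IsCoveringMap φ')
    (hfib' : ∀ e, φ' (Ψ₀' e) = x₀) (hcov' : GammaCovariant φ' x₀ Ψ₀')
    {x y : X} {l : Path x x₀} {l' : Path y x₀} {e e' : E} (h : Ψ x l e = Ψ y l' e') :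
    Ψ' x l e = Ψ' y l' e' := by
  obtain rfl : x = y := by
    rw [← hΨ.proj_apply hφ hfib l e, h, hΨ.proj_apply hφ hfib l' e']
  rw [hΨ.eq_smul_of_apply_eq hφ hfib hinj hcov h, hΨ'.apply_smul_eq hφ' hfib' hcov']

theorem exists_forall_apply_eq [PathConnectedSpace X] [MulAction (FundamentalGroup X x₀) E]
    (hΨ : IsTrivializationOf φ x₀ Ψ₀ Ψ) (hφ : IsCoveringMap φ) (hfib : ∀ e, φ (Ψ₀ e) = x₀)
    (hinj : Function.Injective Ψ₀) (hsurj : ∀ c : C, φ c = x₀ → ∃ e, Ψ₀ e = c)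
    (hcov : GammaCovariant φ x₀ Ψ₀)
    (hΨ' : IsTrivializationOf φ' x₀ Ψ₀' Ψ') (hφ' : IsCoveringMap φ')
    (hfib' : ∀ e, φ' (Ψ₀' e) = x₀) (hcov' : GammaCovariant φ' x₀ Ψ₀') :
    ∃ F : C → C', ∀ x l e, F (Ψ x l e) = Ψ' x l e := by
  choose label hlabel using fun c => hΨ.exists_apply_eq hφ hsurj c (somePath (φ c) x₀)
  exact ⟨fun c => Ψ' (φ c) (somePath (φ c) x₀) (label c), fun x l e =>
    hΨ.apply_eq_of_apply_eq hφ hfib hinj hcov hΨ' hφ' hfib' hcov' (hlabel _)⟩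

theorem proj_apply_of_forall_apply_eq [PathConnectedSpace X]
    (hΨ : IsTrivializationOf φ x₀ Ψ₀ Ψ) (hφ : IsCoveringMap φ) (hfib : ∀ e, φ (Ψ₀ e) = x₀)
    (hsurj : ∀ c : C, φ c = x₀ → ∃ e, Ψ₀ e = c)
    (hΨ' : IsTrivializationOf φ' x₀ Ψ₀' Ψ') (hφ' : IsCoveringMap φ')
    (hfib' : ∀ e, φ' (Ψ₀' e) = x₀) {F : C → C'} (hF : ∀ x l e, F (Ψ x l e) = Ψ' x l e)
    (c : C) : φ' (F c) = φ c :=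
  congrFun (hΨ.funext hφ hsurj (F := φ' ∘ F) (G := φ) fun x l e => by
    rw [Function.comp_apply, hF, hΨ'.proj_apply hφ' hfib', hΨ.proj_apply hφ hfib]) c

theorem continuous_of_forall_apply_eq [PathConnectedSpace X] [LocallyPathConnectedSpace X]
    (hΨ : IsTrivializationOf φ x₀ Ψ₀ Ψ) (hφ : IsCoveringMap φ) (hfib : ∀ e, φ (Ψ₀ e) = x₀)
    (hsurj : ∀ c : C, φ c = x₀ → ∃ e, Ψ₀ e = c)
    (hΨ' : IsTrivializationOf φ' x₀ Ψ₀' Ψ') (hφ' : IsCoveringMap φ')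
    (hfib' : ∀ e, φ' (Ψ₀' e) = x₀) {F : C → C'} (hF : ∀ x l e, F (Ψ x l e) = Ψ' x l e) :
    Continuous F := by
  refine continuous_iff_continuousAt.2 fun c₀ => ?_
  set l := somePath (φ c₀) x₀
  obtain ⟨e, he⟩ := hΨ.exists_apply_eq hφ hsurj c₀ l
  obtain ⟨q, hc₀q, hq⟩ := hφ.isLocalHomeomorph c₀
  obtain ⟨q', hFc₀q', hq'⟩ := hφ'.isLocalHomeomorph (F c₀)
  have hFc₀ : φ' (F c₀) = φ c₀ :=
    hΨ.proj_apply_of_forall_apply_eq hφ hfib hsurj hΨ' hφ' hfib' hF c₀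
  have hc₀q_target : φ c₀ ∈ q.target := by rw [hq]; exact q.map_source hc₀q
  have hc₀q'_target : φ c₀ ∈ q'.target := by rw [← hFc₀, hq']; exact q'.map_source hFc₀q'
  have hq_symm : q.symm (φ c₀) = Ψ (φ c₀) l e := by rw [he, hq]; exact q.left_inv hc₀q
  have hq'_symm : q'.symm (φ c₀) = Ψ' (φ c₀) l e := by
    rw [← hF, he, ← hFc₀, hq']; exact q'.left_inv hFc₀q'
  obtain ⟨U, ⟨hU, hUpc⟩, hUq⟩ := (path_connected_basis (φ c₀)).mem_iff.mp
    (Filter.inter_mem (q.open_target.mem_nhds hc₀q_target)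
      (q'.open_target.mem_nhds hc₀q'_target))
  refine ((q'.continuousAt_symm hc₀q'_target).comp hφ.continuous.continuousAt).congr ?_
  filter_upwards [q.open_source.mem_nhds hc₀q, hφ.continuous.continuousAt hU] with c hcq hcU
  obtain ⟨p, hpU⟩ := hUpc.joinedIn (φ c) hcU (φ c₀) (mem_of_mem_nhds hU)
  have hpq : Set.range p ⊆ q.target ∩ q'.target := by rintro _ ⟨t, rfl⟩; exact hUq (hpU t)
  obtain ⟨γ, hγ⟩ := q.exists_path_lift_symm hq p (hpq.trans Set.inter_subset_left)
  obtain ⟨γ', hγ'⟩ := q'.exists_path_lift_symm hq' p (hpq.trans Set.inter_subset_right)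
  have hc : q.symm (φ c) = c := by rw [hq]; exact q.left_inv hcq
  calc (q'.symm ∘ φ) c = Ψ' (φ c) (p.trans l) e :=
        (hΨ'.apply_trans hφ' hfib' p l (γ'.cast rfl hq'_symm.symm) (by simpa using hγ')).symm
    _ = F c := by
        rw [← hF, hΨ.apply_trans hφ hfib p l (γ.cast hc.symm hq_symm.symm) (by simpa using hγ)]

theorem forall_apply_eq_of_continuous (hΨ : IsTrivializationOf φ x₀ Ψ₀ Ψ)
    (hφ : IsCoveringMap φ) (hfib : ∀ e, φ (Ψ₀ e) = x₀) (hΨ' : IsTrivializationOf φ' x₀ Ψ₀' Ψ')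
    {G : C → C'} (hG : Continuous G) (hGφ : ∀ c, φ' (G c) = φ c)
    (hGΨ₀ : ∀ e, G (Ψ₀ e) = Ψ₀' e) (x : X) (l : Path x x₀) (e : E) :
    G (Ψ x l e) = Ψ' x l e := by
  obtain ⟨γ, hγ⟩ := hΨ.exists_lift hφ hfib l e
  exact hΨ'.eq_of_lift ((γ.map hG).cast rfl (hGΨ₀ e).symm) fun t => by simp [hGφ, hγ]

end IsTrivializationOf

end Comparison

theorem exists_unique_iso_of_coverings_general
    {X : Type} [TopologicalSpace X] [PathConnectedSpace X] [LocallyPathConnectedSpace X]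
    (x₀ : X) (E : Type) [MulAction (FundamentalGroup X x₀) E]
    {C : Type} [TopologicalSpace C] (φ : C → X) (hφ : IsCoveringMap φ)
    {C' : Type} [TopologicalSpace C'] (φ' : C' → X) (hφ' : IsCoveringMap φ')
    (Ψ₀ : E → C) (hfib : ∀ e, φ (Ψ₀ e) = x₀) (hinj : Function.Injective Ψ₀)
    (hsurj : ∀ c : C, φ c = x₀ → ∃ e, Ψ₀ e = c)
    (hcov : GammaCovariant φ x₀ Ψ₀)
    (Ψ₀' : E → C') (hfib' : ∀ e, φ' (Ψ₀' e) = x₀) (hinj' : Function.Injective Ψ₀')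
    (hsurj' : ∀ c : C', φ' c = x₀ → ∃ e, Ψ₀' e = c)
    (hcov' : GammaCovariant φ' x₀ Ψ₀')
    (Ψ : ∀ x : X, Path x x₀ → E → C) (hΨ : IsTrivializationOf φ x₀ Ψ₀ Ψ)
    (Ψ' : ∀ x : X, Path x x₀ → E → C') (hΨ' : IsTrivializationOf φ' x₀ Ψ₀' Ψ') :
    ∃ F : C → C',
      (Continuous F ∧ (∀ c, φ' (F c) = φ c) ∧ (∀ e, F (Ψ₀ e) = Ψ₀' e)) ∧
      (∀ G : C → C',
        Continuous G → (∀ c, φ' (G c) = φ c) → (∀ e, G (Ψ₀ e) = Ψ₀' e) → G = F) ∧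
      IsHomeomorph F ∧
      (∀ (x : X) (l : Path x x₀) (e : E), F (Ψ x l e) = Ψ' x l e) := by
  obtain ⟨F, hF⟩ := hΨ.exists_forall_apply_eq hφ hfib hinj hsurj hcov hΨ' hφ' hfib' hcov'
  obtain ⟨G, hG⟩ := hΨ'.exists_forall_apply_eq hφ' hfib' hinj' hsurj' hcov' hΨ hφ hfib hcov
  have hFc := hΨ.continuous_of_forall_apply_eq hφ hfib hsurj hΨ' hφ' hfib' hF
  have hGc := hΨ'.continuous_of_forall_apply_eq hφ' hfib' hsurj' hΨ hφ hfib hG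
  have hGF : G ∘ F = id := hΨ.funext hφ hsurj fun x l e => by simp [hF, hG]
  have hFG : F ∘ G = id := hΨ'.funext hφ' hsurj' fun x l e => by simp [hF, hG]
  refine ⟨F, ⟨hFc, hΨ.proj_apply_of_forall_apply_eq hφ hfib hsurj hΨ' hφ' hfib' hF, fun e => ?_⟩,
    fun G' hG'c hG'φ hG'Ψ₀ => ?_,
    isHomeomorph_iff_exists_inverse.2 ⟨hFc, G, congrFun hGF, congrFun hFG, hGc⟩, hF⟩
  · rw [← hΨ.apply_refl hfib, hF, hΨ'.apply_refl hfib']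
  · exact hΨ.funext hφ hsurj fun x l e => by
      rw [hΨ.forall_apply_eq_of_continuous hφ hfib hΨ' hG'c hG'φ hG'Ψ₀, hF]

/-- Let `X` be path-connected and locally path-connected, `x₀ ∈ X`, `E` a
finite set with a left action of `Γ = π₁(X, x₀)`. Let `φ : C → X`, `φ' : C' → X` be covering
maps with `Γ`-covariant bijections `Ψ₀ : E → φ⁻¹(x₀)`, `Ψ₀' : E → (φ')⁻¹(x₀)`. Then there
exists a unique continuous `F : C → C'` with `φ' ∘ F = φ` and `F ∘ Ψ₀ = Ψ₀'`; this `F` is a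
homeomorphism, and `F (Ψ_λ e) = Ψ'_λ e` for every path `λ` ending at `x₀` and every `e`,
where `Ψ`, `Ψ'` are the trivializations determined by `Ψ₀`, `Ψ₀'`. -/
theorem exists_unique_iso_of_coverings
    {X : Type} [TopologicalSpace X] [PathConnectedSpace X] [LocallyPathConnectedSpace X]
    (x₀ : X) (E : Type) [Finite E] [MulAction (FundamentalGroup X x₀) E]
    {C : Type} [TopologicalSpace C] (φ : C → X) (hφ : IsCoveringMap φ)
    {C' : Type} [TopologicalSpace C'] (φ' : C' → X) (hφ' : IsCoveringMap φ')
    (Ψ₀ : E → C) (hfib : ∀ e, φ (Ψ₀ e) = x₀) (hinj : Function.Injective Ψ₀)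
    (hsurj : ∀ c : C, φ c = x₀ → ∃ e, Ψ₀ e = c)
    (hcov : GammaCovariant φ x₀ Ψ₀)
    (Ψ₀' : E → C') (hfib' : ∀ e, φ' (Ψ₀' e) = x₀) (hinj' : Function.Injective Ψ₀')
    (hsurj' : ∀ c : C', φ' c = x₀ → ∃ e, Ψ₀' e = c)
    (hcov' : GammaCovariant φ' x₀ Ψ₀')
    (Ψ : ∀ x : X, Path x x₀ → E → C) (hΨ : IsTrivializationOf φ x₀ Ψ₀ Ψ)
    (Ψ' : ∀ x : X, Path x x₀ → E → C') (hΨ' : IsTrivializationOf φ' x₀ Ψ₀' Ψ') :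
    ∃ F : C → C',
      (Continuous F ∧ (∀ c, φ' (F c) = φ c) ∧ (∀ e, F (Ψ₀ e) = Ψ₀' e)) ∧
      (∀ G : C → C',
        Continuous G → (∀ c, φ' (G c) = φ c) → (∀ e, G (Ψ₀ e) = Ψ₀' e) → G = F) ∧
      IsHomeomorph F ∧
      (∀ (x : X) (l : Path x x₀) (e : E), F (Ψ x l e) = Ψ' x l e) :=
  exists_unique_iso_of_coverings_general x₀ E φ hφ φ' hφ' Ψ₀ hfib hinj hsurj hcov Ψ₀' hfib' hinj'
    hsurj' hcov' Ψ hΨ Ψ' hΨ'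
end

section
/- Let X be a path-connected, locally path-connected topological space, x₀ ∈ X, E a finite set with a left action of Γ = π₁(X, x₀), φ : C → X a covering map, and Ψ₀ : E → φ⁻¹(x₀) a Γ-covariant bijection. Then for e₁, e₂ ∈ E, the points Ψ₀(e₁) and Ψ₀(e₂) lie in the same path component of C if and only if e₁ and e₂ lie in the same Γ-orbit of E. Consequently Ψ₀ induces a bijection between the set of Γ-orbits of E and the set of path components of C, and for each Γ-orbit Ω the restriction of φ to the path component C^Ω of C containing Ψ₀(Ω) is a covering map onto X each of whose fibers has exactly |Ω| elements. -/
namespace IsEvenlyCovered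

variable {E X : Type*} [TopologicalSpace E] [TopologicalSpace X] {f : E → X}

theorem domRestrict_of_mem_iff {I : Type*} [TopologicalSpace I] [DiscreteTopology I]
    (hf : Continuous f) {x : X} {U V : Set X} (hV : IsOpen V) (hxV : x ∈ V) (hVU : V ⊆ U)
    (H : f ⁻¹' U ≃ₜ U × I) (hH : ∀ e, (H e).1.1 = f e) {K : Set E} {J : Set I}
    (hKJ : ∀ e : f ⁻¹' U, f e ∈ V → (e.1 ∈ K ↔ (H e).2 ∈ J)) :
    IsEvenlyCovered (K.domRestrict f) x J := by
  have hH_symm (p : U × I) : f (H.symm p) = p.1 := by rw [← hH, H.apply_symm_apply]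
  refine ⟨inferInstance, V, hxV, hV, hV.preimage (hf.comp continuous_subtype_val),
    { toFun e := (⟨f e, e.2⟩, ⟨(H ⟨e.1, hVU e.2⟩).2, (hKJ ⟨e.1, hVU e.2⟩ e.2).1 e.1.2⟩)
      invFun p := ⟨⟨H.symm (⟨p.1, hVU p.1.2⟩, p.2.1),
        (hKJ _ (by simp [hH_symm])).2 (by simp [p.2.2])⟩, by simp [hH_symm]⟩
      left_inv e := by
        ext
        have : H ⟨e.1, hVU e.2⟩ = (⟨f e, hVU e.2⟩, (H ⟨e.1, hVU e.2⟩).2) :=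
          Prod.ext (Subtype.ext (hH _)) rfl
        simp [← this]
      right_inv p := by ext <;> simp [hH_symm]
      continuous_toFun := by fun_prop
      continuous_invFun := by fun_prop }, fun _ ↦ rfl⟩

end IsEvenlyCovered

namespace IsCoveringMap

variable {E X : Type*} [TopologicalSpace E] [TopologicalSpace X] {f : E → X}

theorem exists_lift_eq_one (hf : IsCoveringMap f) (γ : C(unitInterval, X)) (e : E)
    (he : γ 1 = f e) : ∃ Γ : C(unitInterval, E), (∀ t, f (Γ t) = γ t) ∧ Γ 1 = e := by
  let σ : C(unitInterval, unitInterval) := ⟨unitInterval.symm, unitInterval.continuous_symm⟩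
  let Γ := hf.liftPath (γ.comp σ) e (by simpa [σ] using he)
  refine ⟨Γ.comp σ, fun t ↦ ?_, by simpa [σ] using hf.liftPath_zero ..⟩
  simpa [σ] using congr_fun (hf.liftPath_lifts (γ.comp σ) e _) (σ t)

theorem exists_joined_mem_fiber (hf : IsCoveringMap f) (c : E) {x : X} (h : Joined (f c) x) :
    ∃ c', f c' = x ∧ Joined c c' := by
  let γ := h.somePath
  let Γ := hf.liftPath γ c γ.source
  exact ⟨Γ 1, congr_fun (hf.liftPath_lifts ..) 1 |>.trans γ.target, ⟨⟨Γ, hf.liftPath_zero .., rfl⟩⟩⟩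

theorem surjective_domRestrict_pathComponent [PathConnectedSpace X] (hf : IsCoveringMap f)
    (c : E) : Function.Surjective ((pathComponent c).domRestrict f) := fun x ↦ by
  obtain ⟨c', hc', hjoined⟩ := hf.exists_joined_mem_fiber c (PathConnectedSpace.joined _ x)
  exact ⟨⟨c', hjoined⟩, hc'⟩

theorem domRestrict_pathComponent [LocallyPathConnectedSpace X] (hf : IsCoveringMap f) (c : E) :
    IsCoveringMap ((pathComponent c).domRestrict f) := by
  intro x
  obtain ⟨_, U, hxU, hU, -, H, hH⟩ := hf x
  obtain ⟨V, ⟨hV, hxV, hVconn⟩, hVU⟩ :=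
    (isOpen_isPathConnected_basis x).mem_iff.mp (hU.mem_nhds hxU)
  have hsheet (i : f ⁻¹' {x}) : Continuous fun u : U ↦ (H.symm (u, i)).1 := by fun_prop
  refine IsEvenlyCovered.to_isEvenlyCovered_preimage
    (IsEvenlyCovered.domRestrict_of_mem_iff hf.continuous hV hxV hVU H hH
      (J := {i | (H.symm (⟨x, hxU⟩, i)).1 ∈ pathComponent c}) fun e he ↦ ?_)
  have hHe : H e = (⟨f e, hVU he⟩, (H e).2) := Prod.ext (Subtype.ext (hH e)) rfl
  have hjoined : Joined e.1 (H.symm (⟨x, hxU⟩, (H e).2)).1 := by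
    have := (((hVconn.joinedIn _ he _ hxV).mono hVU).joined_subtype).map (hsheet (H e).2)
    rwa [← hHe, H.symm_apply_apply] at this
  exact ⟨hjoined.mem_pathComponent, hjoined.symm.mem_pathComponent⟩

theorem card_fiber_domRestrict_pathComponent_eq (hf : IsCoveringMap f) (c : E) {x y : X}
    (h : Joined x y) :
    Nat.card ((pathComponent c).domRestrict f ⁻¹' {x}) =
      Nat.card ((pathComponent c).domRestrict f ⁻¹' {y}) := by
  let m := hf.monodromy (Path.Homotopic.Quotient.mk h.somePath)
  have hm (e : f ⁻¹' {x}) : Joined e.1 (m e).1 := ⟨(hf.liftPathQuotient _ e).out⟩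
  let fiberEquiv (z : X) : (pathComponent c).domRestrict f ⁻¹' {z} ≃
      {e : f ⁻¹' {z} // e.1 ∈ pathComponent c} :=
    { toFun e := ⟨⟨e.1.1, e.2⟩, e.1.2⟩
      invFun e := ⟨⟨e.1.1, e.2⟩, e.1.2⟩ }
  exact Nat.card_congr <| (fiberEquiv x).trans <| .trans
    ((Equiv.ofBijective m (hf.monodromy_bijective _)).subtypeEquiv fun e ↦
      ⟨(hm e).mem_pathComponent, (hm e).symm.mem_pathComponent⟩) (fiberEquiv y).symm

end IsCoveringMap

namespace GammaCovariant

variable {C X : Type} [TopologicalSpace C] [TopologicalSpace X] {φ : C → X} {x₀ : X}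
  {E : Type} [MulAction (FundamentalGroup X x₀) E] {Ψ₀ : E → C}

theorem joined_smul (hcov : GammaCovariant φ x₀ Ψ₀) (hφ : IsCoveringMap φ)
    (hfib : ∀ e, φ (Ψ₀ e) = x₀) (g : FundamentalGroup X x₀) (e : E) :
    Joined (Ψ₀ (g • e)) (Ψ₀ e) := by
  obtain ⟨μ, rfl⟩ := Quotient.exists_rep (g : Path.Homotopic.Quotient x₀ x₀)
  obtain ⟨Γ, hΓ, hΓ1⟩ := hφ.exists_lift_eq_one μ.toContinuousMap (Ψ₀ e) (by simp [hfib])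
  exact ⟨⟨Γ, hcov μ e Γ hΓ hΓ1, hΓ1⟩⟩

theorem mem_orbit_of_joined (hcov : GammaCovariant φ x₀ Ψ₀) (hφ : Continuous φ)
    (hfib : ∀ e, φ (Ψ₀ e) = x₀) (hinj : Function.Injective Ψ₀) {e₁ e₂ : E}
    (h : Joined (Ψ₀ e₁) (Ψ₀ e₂)) : e₁ ∈ MulAction.orbit (FundamentalGroup X x₀) e₂ := by
  obtain ⟨p⟩ := h
  let μ : Path x₀ x₀ := (p.map hφ).cast (hfib e₁).symm (hfib e₂).symm
  have hμ : p 0 = Ψ₀ (loopClass μ • e₂) := hcov μ e₂ p.toContinuousMap (fun _ ↦ rfl) p.target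
  exact ⟨loopClass μ, hinj (hμ.symm.trans p.source)⟩

theorem joined_iff_mem_orbit (hcov : GammaCovariant φ x₀ Ψ₀) (hφ : IsCoveringMap φ)
    (hfib : ∀ e, φ (Ψ₀ e) = x₀) (hinj : Function.Injective Ψ₀) (e₁ e₂ : E) :
    Joined (Ψ₀ e₁) (Ψ₀ e₂) ↔ e₁ ∈ MulAction.orbit (FundamentalGroup X x₀) e₂ := by
  refine ⟨hcov.mem_orbit_of_joined hφ.continuous hfib hinj, ?_⟩
  rintro ⟨g, rfl⟩
  exact hcov.joined_smul hφ hfib g e₂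

theorem exists_orbitRel_quotient_equiv [PathConnectedSpace X] (hcov : GammaCovariant φ x₀ Ψ₀)
    (hφ : IsCoveringMap φ) (hfib : ∀ e, φ (Ψ₀ e) = x₀) (hinj : Function.Injective Ψ₀)
    (hsurj : ∀ c : C, φ c = x₀ → ∃ e, Ψ₀ e = c) :
    ∃ b : Quotient (MulAction.orbitRel (FundamentalGroup X x₀) E) ≃ ZerothHomotopy C,
      ∀ e : E, b (Quotient.mk _ e) = Quotient.mk (pathSetoid C) (Ψ₀ e) := by
  let F (e : E) : ZerothHomotopy C := Quotient.mk _ (Ψ₀ e)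
  have hF : Function.Surjective F := Quotient.ind fun c ↦ by
    obtain ⟨c', hc', hjoined⟩ := hφ.exists_joined_mem_fiber c (PathConnectedSpace.joined _ x₀)
    obtain ⟨e, rfl⟩ := hsurj c' hc'
    exact ⟨e, Quotient.sound hjoined.symm⟩
  have hker (e₁ e₂ : E) :
      MulAction.orbitRel (FundamentalGroup X x₀) E e₁ e₂ ↔ Setoid.ker F e₁ e₂ := by
    rw [Setoid.ker_def, MulAction.orbitRel_apply, ← hcov.joined_iff_mem_orbit hφ hfib hinj]
    exact (Quotient.eq (r := pathSetoid C)).symm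
  exact ⟨(Quotient.congrRight hker).trans (Setoid.quotientKerEquivOfSurjective F hF),
    fun _ ↦ rfl⟩

theorem card_fiber_domRestrict_eq_card_orbit (hcov : GammaCovariant φ x₀ Ψ₀)
    (hφ : IsCoveringMap φ) (hfib : ∀ e, φ (Ψ₀ e) = x₀) (hinj : Function.Injective Ψ₀)
    (hsurj : ∀ c : C, φ c = x₀ → ∃ e, Ψ₀ e = c) (e : E) :
    Nat.card ((pathComponent (Ψ₀ e)).domRestrict φ ⁻¹' {x₀}) =
      Nat.card (MulAction.orbit (FundamentalGroup X x₀) e) := by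
  have hjoin := hcov.joined_iff_mem_orbit hφ hfib hinj
  refine (Nat.card_eq_of_bijective
    (fun e' ↦ ⟨⟨Ψ₀ e', ((hjoin e' e).2 e'.2).symm⟩, hfib e'⟩) ⟨fun e₁ e₂ h ↦ ?_, fun c ↦ ?_⟩).symm
  · exact Subtype.ext (hinj (congr_arg (fun c ↦ c.1.1) h))
  · obtain ⟨e', he'⟩ := hsurj c.1.1 c.2
    refine ⟨⟨e', (hjoin e' e).1 (he' ▸ c.1.2.symm)⟩, ?_⟩
    exact Subtype.ext (Subtype.ext he')

end GammaCovariant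

theorem orbits_biject_with_components_general
    {C X : Type} [TopologicalSpace C] [TopologicalSpace X]
    [PathConnectedSpace X] [LocallyPathConnectedSpace X] (x₀ : X)
    (E : Type) [MulAction (FundamentalGroup X x₀) E]
    (φ : C → X) (hφ : IsCoveringMap φ)
    (Ψ₀ : E → C) (hfib : ∀ e, φ (Ψ₀ e) = x₀) (hinj : Function.Injective Ψ₀)
    (hsurj : ∀ c : C, φ c = x₀ → ∃ e, Ψ₀ e = c)
    (hcov : GammaCovariant φ x₀ Ψ₀) :
    -- same path component ↔ same `Γ`-orbit
    (∀ e₁ e₂ : E, Joined (Ψ₀ e₁) (Ψ₀ e₂) ↔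
      e₁ ∈ MulAction.orbit (FundamentalGroup X x₀) e₂) ∧
    -- the induced bijection between orbits and path components
    (∃ b : Quotient (MulAction.orbitRel (FundamentalGroup X x₀) E) ≃ ZerothHomotopy C,
      ∀ e : E, b (Quotient.mk (MulAction.orbitRel (FundamentalGroup X x₀) E) e)
        = Quotient.mk (pathSetoid C) (Ψ₀ e)) ∧
    -- the restriction of `φ` to each path component is a covering map onto `X`
    -- whose fibers all have exactly `|Ω|` elements
    (∀ e : E,
      IsCoveringMap ((pathComponent (Ψ₀ e)).restrict φ) ∧
      Function.Surjective ((pathComponent (Ψ₀ e)).restrict φ) ∧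
      ∀ x : X, Nat.card ↥(((pathComponent (Ψ₀ e)).restrict φ) ⁻¹' {x})
        = Nat.card ↥(MulAction.orbit (FundamentalGroup X x₀) e)) := by
  refine ⟨hcov.joined_iff_mem_orbit hφ hfib hinj,
    hcov.exists_orbitRel_quotient_equiv hφ hfib hinj hsurj, fun e ↦
      ⟨hφ.domRestrict_pathComponent (Ψ₀ e), hφ.surjective_domRestrict_pathComponent (Ψ₀ e),
        fun x ↦ ?_⟩⟩
  exact (hφ.card_fiber_domRestrict_pathComponent_eq (Ψ₀ e) (PathConnectedSpace.joined x x₀)).trans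
    (hcov.card_fiber_domRestrict_eq_card_orbit hφ hfib hinj hsurj e)

/-- Let `X` be path-connected and locally path-connected, `x₀ ∈ X`, `E` a
finite set with a left action of `Γ = π₁(X, x₀)`, `φ : C → X` a covering map and
`Ψ₀ : E → φ⁻¹(x₀)` a `Γ`-covariant bijection. Then `Ψ₀ e₁` and `Ψ₀ e₂` lie in the same path
component of `C` iff `e₁` and `e₂` lie in the same `Γ`-orbit; consequently `Ψ₀` induces a
bijection between the `Γ`-orbits of `E` and the path components of `C`, and for each orbit
`Ω` (of an element `e`) the restriction of `φ` to the path component of `C` containing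
`Ψ₀ e` is a covering map onto `X` each of whose fibers has exactly `|Ω|` elements. -/
theorem orbits_biject_with_components
    {C X : Type} [TopologicalSpace C] [TopologicalSpace X]
    [PathConnectedSpace X] [LocallyPathConnectedSpace X] (x₀ : X)
    (E : Type) [Finite E] [MulAction (FundamentalGroup X x₀) E]
    (φ : C → X) (hφ : IsCoveringMap φ)
    (Ψ₀ : E → C) (hfib : ∀ e, φ (Ψ₀ e) = x₀) (hinj : Function.Injective Ψ₀)
    (hsurj : ∀ c : C, φ c = x₀ → ∃ e, Ψ₀ e = c)
    (hcov : GammaCovariant φ x₀ Ψ₀) :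
    -- same path component ↔ same `Γ`-orbit
    (∀ e₁ e₂ : E, Joined (Ψ₀ e₁) (Ψ₀ e₂) ↔
      e₁ ∈ MulAction.orbit (FundamentalGroup X x₀) e₂) ∧
    -- the induced bijection between orbits and path components
    (∃ b : Quotient (MulAction.orbitRel (FundamentalGroup X x₀) E) ≃ ZerothHomotopy C,
      ∀ e : E, b (Quotient.mk (MulAction.orbitRel (FundamentalGroup X x₀) E) e)
        = Quotient.mk (pathSetoid C) (Ψ₀ e)) ∧
    -- the restriction of `φ` to each path component is a covering map onto `X`
    -- whose fibers all have exactly `|Ω|` elements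
    (∀ e : E,
      IsCoveringMap ((pathComponent (Ψ₀ e)).restrict φ) ∧
      Function.Surjective ((pathComponent (Ψ₀ e)).restrict φ) ∧
      ∀ x : X, Nat.card ↥(((pathComponent (Ψ₀ e)).restrict φ) ⁻¹' {x})
        = Nat.card ↥(MulAction.orbit (FundamentalGroup X x₀) e)) :=
  orbits_biject_with_components_general x₀ E φ hφ Ψ₀ hfib hinj hsurj hcov
end
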